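/- arXiv:2603.23250 — 2 statements merged into one kernel-verified Lean document; each statement's English description precedes it below -/
import Mathlib

section
/- Let f₁, f₂, f₃ : ℕ → ℂ be arithmetic functions supported on a finite set, let X, H > 0, and define S_f(α; x) := Σ_{x ≤ n ≤ x+2H} f(n) e(nα). Then Σ_{|h| ≤ H} (1 - |h|/H) Σ_{X ≤ n ≤ 2X} f₁(n) f₂(n+h) f₃(n+2h) = (1/(2H)) ∫_X^{2X} ∫_0^1 S_{f₁}(α; x) S_{f₃}(α; x) S_{f₂}(-2α; x) dα dx. -/
/-!
Expanding the three exponential sums, orthogonality of `e` on `[0, 1]` keeps exactly the triples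
`(n₁, n₃, n₂)` with `n₁ + n₃ = 2 n₂`. Such a triple is counted for those `x ∈ [X, 2X]` whose
window `[x, x + 2H]` contains all three points; since `n₂` is the midpoint, these `x` form the
interval `[max n₁ n₃ - 2H, min n₁ n₃]`, of length `(2H - |n₁ - n₃|)₊ = 2H (1 - |h|/H)₊` where
`h = n₂ - n₁`. Substituting `n₂ = n + h`, `n₃ = n + 2h` turns the left side into the same sum.
-/

open MeasureTheory

/-- `e(α) = e^{2πiα}` -/
noncomputable def e (α : ℝ) : ℂ := Complex.exp (2 * Real.pi * Complex.I * α)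

/-- `S_f(α; x) = Σ_{x ≤ n ≤ x+2H} f(n) e(nα)` -/
noncomputable def S (H : ℝ) (f : ℕ → ℂ) (α x : ℝ) : ℂ :=
  ∑' n : ℕ, if x ≤ (n:ℝ) ∧ (n:ℝ) ≤ x + 2*H then f n * e (n * α) else 0

lemma e_add (a b : ℝ) : e (a + b) = e a * e b := by
  rw [e, e, e, ← Complex.exp_add]
  push_cast
  ring_nf

@[fun_prop]
lemma continuous_e : Continuous e := by
  unfold e
  fun_prop

lemma integral_e_intCast_mul (m : ℤ) :
    ∫ α in (0:ℝ)..1, e (m * α) = if m = 0 then 1 else 0 := by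
  split_ifs with hm
  · simp [hm, e]
  have hc : 2 * Real.pi * Complex.I * m ≠ 0 := by simp [Real.pi_ne_zero, hm]
  simp only [e, Complex.ofReal_mul, Complex.ofReal_intCast, ← mul_assoc]
  rw [integral_exp_mul_complex hc]
  have hperiod : Complex.exp (2 * Real.pi * Complex.I * m) = 1 := by
    rw [← Complex.exp_int_mul_two_pi_mul_I m]
    ring_nf
  simp [hperiod]

def midpointTriples (s : Finset ℕ) : Finset (ℕ × ℕ × ℕ) :=
  {p ∈ s ×ˢ s ×ˢ s | p.1 + p.2.1 = 2 * p.2.2}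

theorem integral_sum_mul_sum_mul_sum_e (s : Finset ℕ) (a b c : ℕ → ℂ) :
    ∫ α in (0:ℝ)..1, (∑ n ∈ s, a n * e (n * α)) * (∑ n ∈ s, b n * e (n * α)) *
        (∑ n ∈ s, c n * e (n * (-2 * α))) =
      ∑ p ∈ midpointTriples s, a p.1 * b p.2.1 * c p.2.2 := by
  have hexpand : ∀ α : ℝ, (∑ n ∈ s, a n * e (n * α)) * (∑ n ∈ s, b n * e (n * α)) *
      (∑ n ∈ s, c n * e (n * (-2 * α))) = ∑ p ∈ s ×ˢ s ×ˢ s,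
        a p.1 * b p.2.1 * c p.2.2 * e (((p.1 + p.2.1 - 2 * p.2.2 : ℤ) : ℝ) * α) := by
    intro α
    rw [Finset.sum_mul_sum, Finset.sum_product]
    simp only [Finset.sum_product, Finset.sum_mul]
    simp only [Finset.mul_sum]
    refine Finset.sum_congr rfl fun n _ => Finset.sum_congr rfl fun m _ =>
      Finset.sum_congr rfl fun k _ => ?_
    rw [show (((n + m - 2 * k : ℤ) : ℝ) * α) = n * α + m * α + k * (-2 * α) by push_cast; ring,
      e_add, e_add]
    ring
  simp only [hexpand]
  rw [intervalIntegral.integral_finsetSum fun p _ => by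
    apply Continuous.intervalIntegrable; fun_prop]
  simp only [intervalIntegral.integral_const_mul, integral_e_intCast_mul, mul_ite, mul_one,
    mul_zero, midpointTriples, Finset.sum_filter]
  refine Finset.sum_congr rfl fun p _ => if_congr ?_ rfl rfl
  omega

/-- `x ∈ window H n` iff `x ≤ n ≤ x + 2H`: the `x` for which `S H f · x` sees `n`. -/
def window (H a : ℝ) : Set ℝ := Set.Icc (a - 2 * H) a

lemma measurableSet_window (H a : ℝ) : MeasurableSet (window H a) := measurableSet_Icc

lemma S_eq_sum {f : ℕ → ℂ} {s : Finset ℕ} (hf : Function.support f ⊆ s) (H α x : ℝ) :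
    S H f α x = ∑ n ∈ s, (window H n).indicator (fun _ => f n) x * e (n * α) := by
  rw [S, tsum_eq_sum fun n hn => by simp [Function.notMem_support.mp fun h => hn (hf h)]]
  refine Finset.sum_congr rfl fun n _ => ?_
  simp only [window, Set.indicator, Set.mem_Icc, sub_le_iff_le_add, add_comm x, ite_mul, zero_mul]
  exact if_congr and_comm rfl rfl

lemma volume_real_window_inter {H a b m : ℝ} (h : a + b = 2 * m) :
    volume.real (window H a ∩ window H b ∩ window H m) = max (2 * H - |a - b|) 0 := by
  have hsub : window H a ∩ window H b ⊆ window H m := fun x ⟨⟨ha₁, ha₂⟩, ⟨hb₁, hb₂⟩⟩ =>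
    ⟨by linarith, by linarith⟩
  rw [Set.inter_eq_left.mpr hsub, window, window, Set.Icc_inter_Icc, Real.volume_real_Icc,
    max_sub_sub_right, ← max_sub_min_eq_abs']
  ring_nf

lemma intervalIntegral_indicator_const {A B : ℝ} {t : Set ℝ} (hAB : A ≤ B)
    (ht : MeasurableSet t) (htAB : t ⊆ Set.Icc A B) (c : ℂ) :
    ∫ x in A..B, t.indicator (fun _ => c) x = volume.real t • c := by
  rw [intervalIntegral.integral_of_le hAB, ← integral_Icc_eq_integral_Ioc,
    setIntegral_indicator ht, Set.inter_eq_right.mpr htAB, setIntegral_const]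

lemma intervalIntegrable_indicator_const {A B : ℝ} {t : Set ℝ} (ht : MeasurableSet t) (c : ℂ) :
    IntervalIntegrable (t.indicator fun _ => c) volume A B :=
  intervalIntegrable_iff.mpr ((integrableOn_const (by simp)).indicator ht)

noncomputable def fejerWeight (H t : ℝ) : ℝ := max (1 - |t| / H) 0

lemma max_two_mul_sub_zero_eq_fejerWeight {H : ℝ} (hH : 0 < H) (t : ℝ) :
    max (2 * H - 2 * |t|) 0 = 2 * H * fejerWeight H t := by
  rw [fejerWeight, mul_max_of_nonneg _ _ (by positivity), mul_zero, mul_sub, mul_one,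
    mul_div_assoc', mul_div_right_comm, mul_div_cancel_right₀ _ hH.ne']

lemma integral_indicator_window_mul {X H a b m : ℝ} (hH : 0 < H) (hm : a + b = 2 * m)
    (ha : X + 2 * H ≤ a ∧ a ≤ 2 * X) (c₁ c₂ c₃ : ℂ) :
    ∫ x in X..(2 * X), (window H a).indicator (fun _ => c₁) x *
        (window H b).indicator (fun _ => c₂) x * (window H m).indicator (fun _ => c₃) x =
      (2 * H * fejerWeight H (m - a) : ℝ) * (c₁ * c₂ * c₃) := by
  simp only [← Set.inter_indicator_mul]
  have hsub : window H a ∩ window H b ∩ window H m ⊆ Set.Icc X (2 * X) :=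
    Set.inter_subset_left.trans <| Set.inter_subset_left.trans <|
      Set.Icc_subset_Icc (by linarith) ha.2
  rw [intervalIntegral_indicator_const (by linarith)
    (((measurableSet_window H a).inter (measurableSet_window H b)).inter
      (measurableSet_window H m)) hsub,
    volume_real_window_inter hm, ← max_two_mul_sub_zero_eq_fejerWeight hH, Complex.real_smul]
  congr 4
  rw [show a - b = 2 * (a - m) by linarith, abs_mul, abs_two, abs_sub_comm]

theorem integral_integral_S_mul_S_mul_S {f₁ f₂ f₃ : ℕ → ℂ} {s : Finset ℕ} {X H : ℝ} (hH : 0 < H)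
    (hs₁ : Function.support f₁ ⊆ s) (hs₂ : Function.support f₂ ⊆ s)
    (hs₃ : Function.support f₃ ⊆ s) (hw₁ : ∀ n : ℕ, f₁ n ≠ 0 → X + 2 * H ≤ n ∧ n ≤ 2 * X) :
    ∫ x in X..(2 * X), ∫ α in (0:ℝ)..1, S H f₁ α x * S H f₃ α x * S H f₂ (-2 * α) x =
      ∑ p ∈ midpointTriples s,
        (2 * H * fejerWeight H (p.2.2 - p.1) : ℝ) * (f₁ p.1 * f₃ p.2.1 * f₂ p.2.2) := by
  simp only [S_eq_sum hs₁, S_eq_sum hs₂, S_eq_sum hs₃, integral_sum_mul_sum_mul_sum_e]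
  rw [intervalIntegral.integral_finsetSum fun p _ => by
    simp only [← Set.inter_indicator_mul]
    exact intervalIntegrable_indicator_const
      (((measurableSet_window H _).inter (measurableSet_window H _)).inter
        (measurableSet_window H _)) _]
  refine Finset.sum_congr rfl fun p hp => ?_
  rcases eq_or_ne (f₁ p.1) 0 with h₁ | h₁
  · simp [h₁]
  have hmid : (p.1 : ℝ) + p.2.1 = 2 * p.2.2 := by
    exact_mod_cast (Finset.mem_filter.mp hp).2
  exact integral_indicator_window_mul hH hmid (hw₁ _ h₁) _ _ _

lemma apply_toNat_eq_sum {f : ℕ → ℂ} {s : Finset ℕ} (hs : Function.support f ⊆ s) (h0 : f 0 = 0)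
    (m : ℤ) : f m.toNat = ∑ n ∈ s, if (n : ℤ) = m then f n else 0 := by
  rcases le_or_gt 0 m with hm | hm
  · lift m to ℕ using hm
    simp only [Int.toNat_natCast, Nat.cast_inj, Finset.sum_ite_eq']
    split_ifs with hms
    · rfl
    · exact Function.notMem_support.mp fun h => hms (hs h)
  · rw [Int.toNat_of_nonpos hm.le, h0]
    exact (Finset.sum_eq_zero fun n _ => if_neg (by omega)).symm

lemma ite_abs_le_mul_eq_fejerWeight_mul {H : ℝ} (hH : 0 < H) (t : ℝ) (z : ℂ) :
    (if |t| ≤ H then (1 - ((|t| : ℝ) : ℂ) / H) * z else 0) = (fejerWeight H t : ℂ) * z := by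
  rw [fejerWeight]
  split_ifs with ht
  · rw [max_eq_left (by rw [sub_nonneg, div_le_one hH]; exact ht)]
    push_cast
    rfl
  · rw [max_eq_right (by rw [sub_nonpos, one_le_div hH]; linarith)]
    simp

lemma fejerWeight_eq_zero {H t : ℝ} (hH : 0 < H) (ht : H ≤ |t|) : fejerWeight H t = 0 :=
  max_eq_right (by rw [sub_nonpos, one_le_div hH]; exact ht)

lemma fejerWeight_intCast_eq_zero {H : ℝ} (hH : 0 < H) {M : ℕ} (hM : H ≤ M) {h : ℤ}
    (hh : h ∉ Finset.Icc (-M : ℤ) M) : fejerWeight H h = 0 := by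
  refine fejerWeight_eq_zero hH (hM.trans ?_)
  rw [Finset.mem_Icc, not_and_or, not_le, not_le] at hh
  have : (M : ℤ) ≤ |h| := by rcases hh with hh | hh <;> rw [le_abs] <;> omega
  exact_mod_cast this

lemma sum_Icc_ite_eq_fejerWeight {H : ℝ} (hH : 0 < H) {M : ℕ} (hM : H ≤ M) (n₁ n₃ n₂ : ℕ)
    (z : ℂ) :
    ∑ h ∈ Finset.Icc (-M : ℤ) M,
        (if (n₃ : ℤ) = n₁ + 2 * h ∧ (n₂ : ℤ) = n₁ + h then (fejerWeight H h : ℂ) * z else 0) =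
      if n₁ + n₃ = 2 * n₂ then (fejerWeight H (n₂ - n₁) : ℂ) * z else 0 := by
  have hcond : ∀ h : ℤ, ((n₃ : ℤ) = n₁ + 2 * h ∧ (n₂ : ℤ) = n₁ + h) ↔
      (n₁ + n₃ = 2 * n₂ ∧ h = n₂ - n₁) := fun h => by omega
  simp only [hcond, ite_and, Finset.sum_ite_irrel, Finset.sum_ite_eq', Finset.sum_const_zero]
  split_ifs with hmid hmem
  · push_cast; rfl
  · have := fejerWeight_intCast_eq_zero hH hM hmem
    push_cast at this
    rw [this, Complex.ofReal_zero, zero_mul]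
  · rfl

theorem tsum_fejer_correlation_eq_sum {f₁ f₂ f₃ : ℕ → ℂ} {s : Finset ℕ} {X H : ℝ} (hH : 0 < H)
    (hs₁ : Function.support f₁ ⊆ s) (hs₂ : Function.support f₂ ⊆ s)
    (hs₃ : Function.support f₃ ⊆ s) (hw₁ : ∀ n : ℕ, f₁ n ≠ 0 → X ≤ n ∧ n ≤ 2 * X)
    (h₂ : f₂ 0 = 0) (h₃ : f₃ 0 = 0) :
    (∑' h : ℤ, if |(h:ℝ)| ≤ H then
        (1 - |(h:ℝ)|/H) *
          ∑' n : ℕ, (if X ≤ (n:ℝ) ∧ (n:ℝ) ≤ 2*X then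
            f₁ n * f₂ ((n:ℤ) + h).toNat * f₃ ((n:ℤ) + 2*h).toNat else 0)
      else 0) =
      ∑ p ∈ midpointTriples s, (fejerWeight H (p.2.2 - p.1) : ℂ) * (f₁ p.1 * f₃ p.2.1 * f₂ p.2.2) := by
  have hcorr : ∀ h : ℤ, ∑' n : ℕ, (if X ≤ (n:ℝ) ∧ (n:ℝ) ≤ 2*X then
      f₁ n * f₂ ((n:ℤ) + h).toNat * f₃ ((n:ℤ) + 2*h).toNat else 0) =
      ∑ p ∈ s ×ˢ s ×ˢ s, if (p.2.1 : ℤ) = p.1 + 2 * h ∧ (p.2.2 : ℤ) = p.1 + h then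
        f₁ p.1 * f₃ p.2.1 * f₂ p.2.2 else 0 := by
    intro h
    rw [tsum_eq_sum fun n hn => by simp [Function.notMem_support.mp fun h => hn (hs₁ h)],
      Finset.sum_product]
    refine Finset.sum_congr rfl fun n _ => ?_
    rcases eq_or_ne (f₁ n) 0 with h₁ | h₁
    · simp [h₁]
    rw [if_pos (hw₁ n h₁), mul_right_comm, mul_assoc, apply_toNat_eq_sum hs₂ h₂,
      apply_toNat_eq_sum hs₃ h₃, Finset.sum_mul_sum, Finset.sum_product]
    simp only [ite_zero_mul_ite_zero]
    simp only [Finset.mul_sum, mul_ite, mul_zero, mul_assoc]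
  set M := ⌈H⌉₊
  simp only [hcorr, ite_abs_le_mul_eq_fejerWeight_mul hH]
  rw [tsum_eq_sum (s := Finset.Icc (-M : ℤ) M) fun h hh => by
    rw [fejerWeight_intCast_eq_zero hH (Nat.le_ceil H) hh, Complex.ofReal_zero, zero_mul]]
  simp only [Finset.mul_sum, mul_ite, mul_zero]
  rw [Finset.sum_comm, midpointTriples, Finset.sum_filter]
  exact Finset.sum_congr rfl fun p _ => sum_Icc_ite_eq_fejerWeight hH (Nat.le_ceil H) _ _ _ _

theorem stmt2_general (f₁ f₂ f₃ : ℕ → ℂ) (X H : ℝ) (hH : 0 < H)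
    (h1 : ∀ n : ℕ, f₁ n ≠ 0 → X + 2*H ≤ (n:ℝ) ∧ (n:ℝ) ≤ 2*X - 4*H)
    (h2 : ∀ n : ℕ, f₂ n ≠ 0 → X + 2*H ≤ (n:ℝ) ∧ (n:ℝ) ≤ 2*X - 4*H)
    (h3 : ∀ n : ℕ, f₃ n ≠ 0 → X + 2*H ≤ (n:ℝ) ∧ (n:ℝ) ≤ 2*X - 4*H) :
    (∑' h : ℤ, if |(h:ℝ)| ≤ H then
        (1 - |(h:ℝ)|/H) *
          ∑' n : ℕ, (if X ≤ (n:ℝ) ∧ (n:ℝ) ≤ 2*X then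
            f₁ n * f₂ ((n:ℤ) + h).toNat * f₃ ((n:ℤ) + 2*h).toNat else 0)
      else 0)
    = (1/(2*H) : ℂ) *
        ∫ x in X..(2*X), ∫ α in (0:ℝ)..1,
          S H f₁ α x * S H f₃ α x * S H f₂ (-2*α) x := by
  have hsupp : ∀ f : ℕ → ℂ, (∀ n : ℕ, f n ≠ 0 → X + 2*H ≤ (n:ℝ) ∧ (n:ℝ) ≤ 2*X - 4*H) →
      Function.support f ⊆ Finset.range (⌊2 * X⌋₊ + 1) ∧ f 0 = 0 ∧
        ∀ n : ℕ, f n ≠ 0 → X + 2 * H ≤ n ∧ n ≤ 2 * X := fun f hf => by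
    have hw : ∀ n : ℕ, f n ≠ 0 → X + 2 * H ≤ n ∧ n ≤ 2 * X :=
      fun n hn => ⟨(hf n hn).1, by linarith [hf n hn]⟩
    refine ⟨fun n hn => ?_, by_contra fun h0 => ?_, hw⟩
    · exact Finset.mem_range.mpr (Nat.lt_succ_of_le (Nat.le_floor (hw n hn).2))
    · obtain ⟨hlo, hhi⟩ := hf 0 h0
      rw [Nat.cast_zero] at hlo hhi
      linarith
  obtain ⟨hs₁, -, hw₁⟩ := hsupp f₁ h1
  obtain ⟨hs₂, h₂, -⟩ := hsupp f₂ h2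
  obtain ⟨hs₃, h₃, -⟩ := hsupp f₃ h3
  rw [tsum_fejer_correlation_eq_sum hH hs₁ hs₂ hs₃
      (fun n hn => ⟨by linarith [hw₁ n hn], (hw₁ n hn).2⟩) h₂ h₃,
    integral_integral_S_mul_S_mul_S hH hs₁ hs₂ hs₃ hw₁, Finset.mul_sum]
  refine Finset.sum_congr rfl fun p _ => ?_
  have hH' : (H : ℂ) ≠ 0 := Complex.ofReal_ne_zero.mpr hH.ne'
  push_cast
  field_simp

/-- The ternary correlation sum equals the circle-method integral. -/
theorem stmt2 (f₁ f₂ f₃ : ℕ → ℂ) (X H : ℝ) (hX : 0 < X) (hH : 0 < H) (hHX : H ≤ X / 8)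
    (h1 : ∀ n : ℕ, f₁ n ≠ 0 → X + 2*H ≤ (n:ℝ) ∧ (n:ℝ) ≤ 2*X - 4*H)
    (h2 : ∀ n : ℕ, f₂ n ≠ 0 → X + 2*H ≤ (n:ℝ) ∧ (n:ℝ) ≤ 2*X - 4*H)
    (h3 : ∀ n : ℕ, f₃ n ≠ 0 → X + 2*H ≤ (n:ℝ) ∧ (n:ℝ) ≤ 2*X - 4*H) :
    (∑' h : ℤ, if |(h:ℝ)| ≤ H then
        (1 - |(h:ℝ)|/H) *
          ∑' n : ℕ, (if X ≤ (n:ℝ) ∧ (n:ℝ) ≤ 2*X then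
            f₁ n * f₂ ((n:ℤ) + h).toNat * f₃ ((n:ℤ) + 2*h).toNat else 0)
      else 0)
    = (1/(2*H) : ℂ) *
        ∫ x in X..(2*X), ∫ α in (0:ℝ)..1,
          S H f₁ α x * S H f₃ α x * S H f₂ (-2*α) x :=
  stmt2_general f₁ f₂ f₃ X H hH h1 h2 h3
end

section
/- Let X ≥ 2, H ≥ 1, x ∈ [X, 2X], and let γ be a real number with 0 < |γ| ≤ 1. Then ∫_{x - H}^{x + 3H} ∫_{x - H}^{x + 3H} min(|γ| X, 1/|log(y/z)|) dy dz ≪ H X log X, where the implied constant is absolute. -/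
/-!
For `0 ≤ y, z ≤ M` the logarithm satisfies `|log (y / z)| ≥ |y - z| / M`, so with `A = |γ| X`
and `M = 5 X` the kernel is at most `min (A, M / |y - z|) ≤ 2 M / (|y - z| + M / A)`.
Integrating this majorant in `z` over an interval of length `4 H` around `y` gives
`4 M log (1 + 4 A H / M) ≪ X log X`, and the outer integral contributes the factor `4 H`.
-/

open MeasureTheory Set Real
open scoped Interval

lemma sub_div_le_log_sub_log {y z M : ℝ} (hz : 0 < z) (hzy : z ≤ y) (hyM : y ≤ M) :
    (y - z) / M ≤ log y - log z := by
  have hy : 0 < y := hz.trans_le hzy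
  calc (y - z) / M ≤ (y - z) / y := by gcongr
    _ = 1 - (y / z)⁻¹ := by field_simp
    _ ≤ log (y / z) := one_sub_inv_le_log_of_pos (by positivity)
    _ = log y - log z := log_div hy.ne' hz.ne'

/-- With `1 / 0 = 0` and `log 0 = 0` both sides vanish when `y = z`, and the left side vanishes
when `y = 0` or `z = 0`. -/
lemma one_div_abs_log_div_le {y z M : ℝ} (hy : 0 ≤ y) (hz : 0 ≤ z) (hyM : y ≤ M) (hzM : z ≤ M) :
    1 / |log (y / z)| ≤ M / |y - z| := by
  have hM : 0 ≤ M := hy.trans hyM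
  wlog hzy : z ≤ y generalizing y z
  · rw [← inv_div z y, log_inv, abs_neg, abs_sub_comm]
    exact this hz hy hzM hyM (by linarith)
  rcases hz.eq_or_lt with rfl | hz
  · simp only [div_zero, log_zero, abs_zero]; positivity
  rcases hzy.eq_or_lt with rfl | hzy
  · simp
  have hyz : 0 < y - z := sub_pos.mpr hzy
  rw [abs_of_pos hyz, log_div (by linarith) hz.ne', ← one_div_div (y - z) M]
  exact one_div_le_one_div_of_le (div_pos hyz (by linarith))
    ((sub_div_le_log_sub_log hz hzy.le hyM).trans (le_abs_self _))

lemma min_div_le_two_mul_div_add {A M d : ℝ} (hA : 0 < A) (hM : 0 < M) (hd : 0 ≤ d) :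
    min A (M / d) ≤ 2 * M / (d + M / A) := by
  have hden : 0 < d + M / A := by positivity
  rcases le_or_gt (A * d) M with h | h
  · refine (min_le_left _ _).trans ?_
    rw [le_div_iff₀ hden, mul_add, mul_div_cancel₀ _ hA.ne']
    linarith
  · have hMA : M / A < d := by rwa [div_lt_iff₀ hA, mul_comm]
    refine (min_le_right _ _).trans ?_
    rw [div_le_div_iff₀ (hMA.trans_le' (by positivity)) hden]
    nlinarith

lemma min_one_div_abs_log_div_le {A M y z : ℝ} (hA : 0 < A) (hM : 0 < M) (hy : 0 ≤ y)
    (hz : 0 ≤ z) (hyM : y ≤ M) (hzM : z ≤ M) :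
    min A (1 / |log (y / z)|) ≤ 2 * M / (|y - z| + M / A) :=
  (min_le_min_left A (one_div_abs_log_div_le hy hz hyM hzM)).trans
    (min_div_le_two_mul_div_add hA hM (abs_nonneg _))

lemma integral_div_abs_add {b R : ℝ} (c : ℝ) (hb : 0 < b) (hR : 0 ≤ R) :
    ∫ u in -R..R, c / (|u| + b) = 2 * c * log ((R + b) / b) := by
  have hcont : Continuous fun u : ℝ => c / (|u| + b) :=
    continuous_const.div (continuous_abs.add continuous_const) fun u => by positivity
  have hhalf : ∫ u in (0 : ℝ)..R, c / (|u| + b) = c * log ((R + b) / b) := by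
    calc ∫ u in (0 : ℝ)..R, c / (|u| + b) = ∫ u in (0 : ℝ)..R, c * (u + b)⁻¹ := by
          refine intervalIntegral.integral_congr fun u hu => ?_
          rw [uIcc_of_le hR] at hu
          simp only [abs_of_nonneg hu.1, div_eq_mul_inv]
      _ = c * log ((R + b) / b) := by
          rw [intervalIntegral.integral_const_mul, intervalIntegral.integral_comp_add_right
            (fun u => u⁻¹), zero_add, integral_inv_of_pos hb (by linarith)]
  rw [← intervalIntegral.integral_add_adjacent_intervals (b := 0) (hcont.intervalIntegrable _ _)
    (hcont.intervalIntegrable _ _), ← neg_zero, ← intervalIntegral.integral_comp_neg, neg_zero]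
  simp only [abs_neg, hhalf]
  ring

lemma integral_min_one_div_abs_log_div_le {A M a b y : ℝ} (hA : 0 < A) (hM : 0 < M)
    (ha : 0 ≤ a) (hbM : b ≤ M) (hy : y ∈ Icc a b) :
    ∫ z in a..b, min A (1 / |log (y / z)|) ≤ 4 * M * log (1 + A * (b - a) / M) := by
  obtain ⟨hay, hyb⟩ := hy
  set R := b - a
  set k : ℝ → ℝ := fun u => 2 * M / (|u| + M / A)
  have hk : Continuous fun z => k (y - z) :=
    continuous_const.div ((continuous_const.sub continuous_id).abs.add continuous_const)
      fun u => by positivity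
  have hf : IntervalIntegrable (fun z => min A (1 / |log (y / z)|)) volume a b := by
    refine IntervalIntegrable.mono_fun' (g := fun _ => A) intervalIntegrable_const
      (Measurable.aestronglyMeasurable (by measurability)) (ae_of_all _ fun z => ?_)
    dsimp only
    rw [norm_of_nonneg (le_min hA.le (by positivity))]
    exact min_le_left _ _
  calc ∫ z in a..b, min A (1 / |log (y / z)|)
      ≤ ∫ z in a..b, k (y - z) :=
        intervalIntegral.integral_mono_on (hay.trans hyb) hf (hk.intervalIntegrable _ _) fun z hz =>
          min_one_div_abs_log_div_le hA hM (ha.trans hay) (ha.trans hz.1) (hyb.trans hbM)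
            (hz.2.trans hbM)
    _ ≤ ∫ z in (y - R)..(y + R), k (y - z) :=
        intervalIntegral.integral_mono_interval (by linarith) (hay.trans hyb) (by linarith)
          (ae_of_all _ fun z => by positivity) (hk.intervalIntegrable _ _)
    _ = ∫ u in -R..R, k u := by
        rw [intervalIntegral.integral_comp_sub_left k, sub_add_cancel_left, sub_sub_cancel]
    _ = 4 * M * log (1 + A * R / M) := by
        rw [integral_div_abs_add _ (by positivity) (by linarith)]
        rw [show (R + M / A) / (M / A) = 1 + A * R / M by field_simp; ring]
        ring

/-- Second-moment kernel bound:
`∫∫ min(|γ|X, 1/|log(y/z)|) dy dz ≪ H X log X` with an absolute implied constant. -/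
theorem stmt5 : ∃ C : ℝ, 0 < C ∧ ∀ X H x γ : ℝ,
    2 ≤ X → 1 ≤ H → H ≤ X → X ≤ x → x ≤ 2*X → 0 < |γ| → |γ| ≤ 1 →
    (∫ y in (x - H)..(x + 3*H), ∫ z in (x - H)..(x + 3*H),
        min (|γ| * X) (1 / |Real.log (y / z)|))
      ≤ C * H * X * Real.log X := by
  refine ⟨160, by norm_num, fun X H x γ hX hH hHX hx1 hx2 _ hγ1 => ?_⟩
  have hwidth : |γ| * X * (x + 3 * H - (x - H)) / (5 * X) = 4 / 5 * |γ| * H := by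
    field_simp; ring
  have hlog : log (1 + 4 / 5 * |γ| * H) ≤ 2 * log X := by
    calc log (1 + 4 / 5 * |γ| * H) ≤ log (X ^ 2) :=
          log_le_log (by positivity) (by nlinarith [abs_nonneg γ])
      _ = 2 * log X := by rw [log_pow]; norm_num
  have hinner : ∀ y ∈ Ι (x - H) (x + 3 * H),
      ‖∫ z in (x - H)..(x + 3 * H), min (|γ| * X) (1 / |log (y / z)|)‖ ≤ 40 * X * log X := by
    intro y hy
    rw [uIoc_of_le (by linarith)] at hy
    rw [norm_of_nonneg (intervalIntegral.integral_nonneg (by linarith)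
      fun z _ => le_min (by positivity) (by positivity))]
    calc _ ≤ 4 * (5 * X) * log (1 + |γ| * X * (x + 3 * H - (x - H)) / (5 * X)) :=
          integral_min_one_div_abs_log_div_le (by positivity) (by positivity) (by linarith)
            (by linarith) (Ioc_subset_Icc_self hy)
      _ ≤ 40 * X * log X := by rw [hwidth]; nlinarith
  calc _ ≤ ‖∫ y in (x - H)..(x + 3 * H), ∫ z in (x - H)..(x + 3 * H),
        min (|γ| * X) (1 / |log (y / z)|)‖ := le_norm_self _
    _ ≤ 40 * X * log X * |x + 3 * H - (x - H)| :=
        intervalIntegral.norm_integral_le_of_norm_le_const hinner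
    _ = 160 * H * X * log X := by rw [abs_of_nonneg (by linarith)]; ring
end
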